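/- For an integer k ≥ 1, let P = {p_1, …, p_{2k+1}} ⊂ ℝ² be the triangular chain, where p_j = (j/2, 0) if j is odd and p_j = (j/2, √3/2) if j is even. Then mst(P) = 2k, the maximum over all proper bipartitions P = R ∪ B of mst(R) + mst(B) equals 3k − 2, and hence the maximum EMST-ratio of P equals (3k−2)/(2k). -/

import Mathlib

/-!
Consecutive points of the chain are at distance 1 and distinct points at distance at least 1,
so `mst P = 2k`. Points `p a`, `p b` with `a ≤ b` are at distance at most `⌈(b - a) / 2⌉`, so
the spanning path through the sorted indices of a part `A` costs at most an integer `c` with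
`2c ≤ max A - min A + |A| - 1`. For a bipartition the two maxima are distinct and at most
`2k + 1`, the two minima distinct and at least `1`, so the two integers add up to at most
`(6k - 3) / 2`, hence to at most `3k - 2`. The bipartition `{p 1, p (2k + 1)}` and the rest
attains this.
-/

open scoped Classical

/-- The length of a minimum spanning tree of a finite point set `S` in a metric space:
the infimum, over all trees with vertex set `S`, of the sum of distances over the edges. -/
noncomputable def mst {X : Type*} [MetricSpace X] (S : Finset X) : ℝ :=
  sInf {c : ℝ | ∃ G : SimpleGraph S, G.IsTree ∧
    c = ∑ᶠ e ∈ G.edgeSet,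
      Sym2.lift ⟨fun (u v : S) => dist (u : X) (v : X), fun _ _ => dist_comm _ _⟩ e}

open SimpleGraph Finset

namespace SimpleGraph

theorem edgeFinset_pathGraph (n : ℕ) :
    (pathGraph (n + 1)).edgeFinset = univ.image fun i : Fin n => s(i.castSucc, i.succ) := by
  ext e
  induction e with
  | _ u v =>
    simp only [mem_edgeFinset, mem_edgeSet, pathGraph_adj, mem_image, mem_univ, true_and,
      Sym2.eq_iff, Fin.ext_iff, Fin.val_castSucc, Fin.val_succ]
    constructor
    · rintro (h | h)
      · exact ⟨⟨u, by omega⟩, .inl ⟨rfl, h⟩⟩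
      · exact ⟨⟨v, by omega⟩, .inr ⟨rfl, h⟩⟩
    · rintro ⟨i, ⟨hu, hv⟩ | ⟨hv, hu⟩⟩ <;> omega

theorem card_edgeFinset_pathGraph (n : ℕ) : #(pathGraph (n + 1)).edgeFinset = n := by
  rw [edgeFinset_pathGraph, card_image_of_injective _ fun i j h => ?_, card_univ, Fintype.card_fin]
  simp only [Sym2.eq_iff, Fin.ext_iff, Fin.val_castSucc, Fin.val_succ] at h
  omega

theorem isTree_pathGraph (n : ℕ) : (pathGraph (n + 1)).IsTree := by
  rw [isTree_iff_connected_and_card, Nat.card_eq_fintype_card, ← edgeFinset_card,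
    card_edgeFinset_pathGraph]
  exact ⟨pathGraph_connected n, by simp⟩

end SimpleGraph

section MST

variable {X : Type*} [MetricSpace X] {S : Finset X}

noncomputable def edgeLength : Sym2 S → ℝ :=
  Sym2.lift ⟨fun u v => dist (u : X) v, fun _ _ => dist_comm _ _⟩

theorem edgeLength_nonneg (e : Sym2 S) : 0 ≤ edgeLength e := by
  induction e with
  | _ u v => exact dist_nonneg

theorem mst_eq_sInf : mst S = sInf {c | ∃ G : SimpleGraph S, G.IsTree ∧
    c = ∑ e ∈ G.edgeFinset, edgeLength e} := by
  simp only [mst, ← coe_edgeFinset, finsum_mem_coe_finset]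
  rfl

theorem mst_le_of_isTree (G : SimpleGraph S) (hG : G.IsTree) :
    mst S ≤ ∑ᶠ e ∈ G.edgeSet, edgeLength e := by
  rw [← coe_edgeFinset, finsum_mem_coe_finset, mst_eq_sInf]
  refine csInf_le ⟨0, ?_⟩ ⟨G, hG, rfl⟩
  rintro _ ⟨_, _, rfl⟩
  exact sum_nonneg fun e _ => edgeLength_nonneg e

theorem le_mst_of_le_dist (hS : S.Nonempty) {d : ℝ}
    (hd : ∀ x ∈ S, ∀ y ∈ S, x ≠ y → d ≤ dist x y) : (#S - 1 : ℝ) * d ≤ mst S := by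
  have : Nonempty S := hS.to_subtype
  obtain ⟨T, -, hT⟩ := (connected_top (V := S)).exists_isTree_le
  rw [mst_eq_sInf]
  refine le_csInf ⟨_, T, hT, rfl⟩ ?_
  rintro _ ⟨G, hG, rfl⟩
  have hcard : (#G.edgeFinset : ℝ) = #S - 1 := by
    rw [eq_sub_iff_add_eq, ← Nat.cast_add_one, hG.card_edgeFinset, Fintype.card_coe]
  rw [← hcard, ← nsmul_eq_mul]
  refine card_nsmul_le_sum _ _ _ fun e he => ?_
  induction e with
  | _ u v => exact hd u u.2 v v.2 fun h => G.ne_of_adj (by simpa using he) (Subtype.ext h)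

theorem mst_image_le_sum_dist [DecidableEq X] {n : ℕ} {g : Fin (n + 1) → X}
    (hg : Function.Injective g) :
    mst (univ.image g) ≤ ∑ i : Fin n, dist (g i.castSucc) (g i.succ) := by
  let e : Fin (n + 1) ≃ univ.image g :=
    Equiv.ofBijective (fun i => ⟨g i, mem_image_of_mem g (mem_univ i)⟩)
      ⟨fun i j h => hg (congrArg Subtype.val h), by
        rintro ⟨x, hx⟩
        obtain ⟨i, -, rfl⟩ := mem_image.mp hx
        exact ⟨i, rfl⟩⟩
  have hT : ((pathGraph (n + 1)).map e.toEmbedding).IsTree :=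
    (Iso.map e _).isTree_iff.mp (isTree_pathGraph n)
  refine (mst_le_of_isTree _ hT).trans_eq ?_
  rw [edgeSet_map, finsum_mem_image e.toEmbedding.sym2Map.injective.injOn, ← coe_edgeFinset,
    finsum_mem_coe_finset, edgeFinset_pathGraph, sum_image fun i _ j _ h => ?_]
  · rfl
  · simp only [Sym2.eq_iff, Fin.ext_iff, Fin.val_castSucc, Fin.val_succ] at h
    omega

theorem le_mst_image [DecidableEq X] {ι : Type*} {q : ι → X} (hq : Function.Injective q)
    {A : Finset ι} (hA : A.Nonempty) {d : ℝ}
    (hd : ∀ i ∈ A, ∀ j ∈ A, i ≠ j → d ≤ dist (q i) (q j)) :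
    (#A - 1 : ℝ) * d ≤ mst (A.image q) := by
  rw [← card_image_of_injective A hq]
  refine le_mst_of_le_dist (hA.image q) ?_
  simp only [mem_image]
  rintro _ ⟨i, hi, rfl⟩ _ ⟨j, hj, rfl⟩ hij
  exact hd i hi j hj (ne_of_apply_ne q hij)

end MST

theorem two_mul_sum_half_gap_add_le {n : ℕ} {e : Fin (n + 1) → ℕ} (he : Monotone e) :
    2 * ∑ i : Fin n, (e i.succ - e i.castSucc + 1) / 2 + e 0 ≤ e (Fin.last n) + n := by
  induction n with
  | zero => simp
  | succ n ih =>
    have hlast := he (Fin.castSucc_le_succ (Fin.last n))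
    have := ih (he.comp Fin.strictMono_castSucc.monotone)
    rw [Fin.sum_univ_castSucc]
    simp only [Function.comp_apply, Fin.succ_castSucc, Fin.succ_last, Fin.castSucc_zero,
      Nat.succ_eq_add_one] at this hlast ⊢
    omega

theorem Finset.exists_disjoint_union_image_eq {ι α : Type*} [DecidableEq ι] [DecidableEq α]
    {s : Finset ι} {f : ι → α} {R B : Finset α} (hd : Disjoint R B)
    (hu : R ∪ B = s.image f) :
    ∃ A A' : Finset ι, Disjoint A A' ∧ A ∪ A' = s ∧ A.image f = R ∧ A'.image f = B := by
  have himage {C : Finset α} (hC : C ⊆ s.image f) : (s.filter (f · ∈ C)).image f = C := by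
    rw [← filter_image (p := (· ∈ C)), filter_mem_eq_inter, inter_eq_right.mpr hC]
  refine ⟨s.filter (f · ∈ R), s.filter (f · ∈ B),
    disjoint_filter.mpr fun _ _ h => disjoint_left.mp hd h, ?_,
    himage (hu ▸ subset_union_left), himage (hu ▸ subset_union_right)⟩
  rw [filter_union_right, filter_true_of_mem fun i hi => ?_]
  rw [← mem_union, hu]
  exact mem_image_of_mem f hi

section CeilHalfDist

variable {X : Type*} [MetricSpace X] {q : ℕ → X}

-- In `ℕ`, `(j - i + 1) / 2` is `⌈(j - i) / 2⌉`.
theorem exists_nat_mst_image_le [DecidableEq X] (hq : Function.Injective q)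
    (hdist : ∀ i j, i ≤ j → dist (q i) (q j) ≤ ((j - i + 1) / 2 : ℕ))
    {A : Finset ℕ} (hA : A.Nonempty) :
    ∃ c : ℕ, mst (A.image q) ≤ c ∧ 2 * c + A.min' hA + 1 ≤ A.max' hA + #A := by
  obtain ⟨n, hn⟩ : ∃ n, #A = n + 1 := ⟨#A - 1, by have := hA.card_pos; omega⟩
  set e := A.orderEmbOfFin hn
  refine ⟨∑ i : Fin n, (e i.succ - e i.castSucc + 1) / 2, ?_, ?_⟩
  · calc mst (A.image q) = mst (univ.image (q ∘ e)) := by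
          rw [← image_image, image_orderEmbOfFin_univ]
      _ ≤ ∑ i : Fin n, dist (q (e i.castSucc)) (q (e i.succ)) :=
          mst_image_le_sum_dist (hq.comp e.injective)
      _ ≤ _ := by
          rw [Nat.cast_sum]
          exact sum_le_sum fun i _ => hdist _ _ (e.monotone (Fin.castSucc_le_succ i))
  · have h0 : e 0 = A.min' hA := orderEmbOfFin_zero hn n.succ_pos
    have hlast : e (Fin.last n) = A.max' hA := orderEmbOfFin_last hn n.succ_pos
    have := two_mul_sum_half_gap_add_le e.monotone
    omega

theorem mst_add_mst_le_of_union_eq_image [DecidableEq X] (hq : Function.Injective q)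
    (hdist : ∀ i j, i ≤ j → dist (q i) (q j) ≤ ((j - i + 1) / 2 : ℕ)) (k : ℕ)
    {R B : Finset X} (hR : R.Nonempty) (hB : B.Nonempty) (hRB : Disjoint R B)
    (hu : R ∪ B = (Icc 1 (2 * k + 1)).image q) : mst R + mst B ≤ 3 * k - 2 := by
  obtain ⟨A, A', hAA', hunion, rfl, rfl⟩ := exists_disjoint_union_image_eq hRB hu
  have hA := image_nonempty.mp hR
  have hA' := image_nonempty.mp hB
  obtain ⟨c, hc, hc2⟩ := exists_nat_mst_image_le hq hdist hA
  obtain ⟨c', hc', hc2'⟩ := exists_nat_mst_image_le hq hdist hA'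
  have hbounds {x} (hx : x ∈ A ∪ A') : 1 ≤ x ∧ x ≤ 2 * k + 1 := mem_Icc.mp (hunion ▸ hx)
  have hmax := hbounds (mem_union_left _ (A.max'_mem hA))
  have hmax' := hbounds (mem_union_right _ (A'.max'_mem hA'))
  have hmin := hbounds (mem_union_left _ (A.min'_mem hA))
  have hmin' := hbounds (mem_union_right _ (A'.min'_mem hA'))
  have hmax_ne : A.max' hA ≠ A'.max' hA' := fun h =>
    disjoint_left.mp hAA' (A.max'_mem hA) (h ▸ A'.max'_mem hA')
  have hmin_ne : A.min' hA ≠ A'.min' hA' := fun h =>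
    disjoint_left.mp hAA' (A.min'_mem hA) (h ▸ A'.min'_mem hA')
  have hcard : #A + #A' = 2 * k + 1 := by
    rw [← card_union_of_disjoint hAA', hunion, Nat.card_Icc]
    omega
  have hcc' : c + c' + 2 ≤ 3 * k := by omega
  have : (c : ℝ) + c' + 2 ≤ 3 * k := by exact_mod_cast hcc'
  linarith

end CeilHalfDist

noncomputable def triangularChain (j : ℕ) : EuclideanSpace ℝ (Fin 2) :=
  if Odd j then (WithLp.equiv 2 (Fin 2 → ℝ)).symm ![(j : ℝ) / 2, 0]
  else (WithLp.equiv 2 (Fin 2 → ℝ)).symm ![(j : ℝ) / 2, Real.sqrt 3 / 2]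

namespace triangularChain

theorem dist_sq (i j : ℕ) : dist (triangularChain i) (triangularChain j) ^ 2 =
    ((i : ℝ) - j) ^ 2 / 4 + if i % 2 = j % 2 then 0 else 3 / 4 := by
  have h3 : Real.sqrt 3 ^ 2 = 3 := Real.sq_sqrt (by norm_num)
  rw [EuclideanSpace.dist_eq, Real.sq_sqrt (by positivity), Fin.sum_univ_two]
  rcases Nat.even_or_odd i with hi | hi <;> rcases Nat.even_or_odd j with hj | hj <;>
    simp [triangularChain, Real.dist_eq, sq_abs, abs_of_nonneg (Real.sqrt_nonneg 3), hi, hj,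
      Nat.not_odd_iff_even.mpr, Nat.even_iff.mp, Nat.odd_iff.mp] <;>
    first | ring1 | linear_combination h3 / 4

theorem abs_sub_div_two_le_dist (i j : ℕ) :
    |(i : ℝ) - j| / 2 ≤ dist (triangularChain i) (triangularChain j) := by
  refine le_of_pow_le_pow_left₀ two_ne_zero dist_nonneg ?_
  rw [dist_sq, div_pow, sq_abs]
  split_ifs <;> linarith

theorem one_le_dist {i j : ℕ} (h : i ≠ j) :
    1 ≤ dist (triangularChain i) (triangularChain j) := by
  refine le_of_pow_le_pow_left₀ two_ne_zero dist_nonneg ?_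
  rw [dist_sq, one_pow]
  split_ifs with hij
  · obtain h2 | h2 : (i : ℝ) + 2 ≤ j ∨ (j : ℝ) + 2 ≤ i := by norm_cast; omega
    all_goals nlinarith
  · obtain h1 | h1 : (i : ℝ) + 1 ≤ j ∨ (j : ℝ) + 1 ≤ i := by norm_cast; omega
    all_goals nlinarith

theorem dist_le {i j : ℕ} (h : i ≤ j) :
    dist (triangularChain i) (triangularChain j) ≤ ((j - i + 1) / 2 : ℕ) := by
  refine le_of_pow_le_pow_left₀ two_ne_zero (Nat.cast_nonneg _) ?_
  set c := (j - i + 1) / 2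
  rw [dist_sq]
  split_ifs with hij
  · have hc : (j : ℝ) = i + 2 * c := by norm_cast; omega
    rw [hc]; linarith
  · have hc : (j : ℝ) + 1 = i + 2 * c := by norm_cast; omega
    have hc1 : (1 : ℝ) ≤ c := by norm_cast; omega
    nlinarith

theorem injective : Function.Injective triangularChain := fun i j h =>
  by_contra fun hij => (one_le_dist hij).not_gt (by simp [h])

theorem mst_image_Icc (k : ℕ) :
    mst ((Icc 1 (2 * k + 1)).image triangularChain) = 2 * k := by
  have hne : (Icc 1 (2 * k + 1)).Nonempty := nonempty_Icc.mpr (by omega)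
  apply le_antisymm
  · obtain ⟨c, hc, hc2⟩ := exists_nat_mst_image_le injective (fun _ _ => dist_le) hne
    have hmin := (mem_Icc.mp (min'_mem _ hne)).1
    have hmax := (mem_Icc.mp (max'_mem _ hne)).2
    have hc2k : (c : ℝ) ≤ 2 * k := by
      simp only [Nat.card_Icc] at hc2
      exact_mod_cast (by omega : c ≤ 2 * k)
    exact hc.trans hc2k
  · have := le_mst_image injective hne fun i _ j _ => one_le_dist
    rw [Nat.card_Icc, add_tsub_cancel_right] at this
    push_cast at this
    linarith

theorem mst_add_mst_le {k : ℕ} {R B : Finset (EuclideanSpace ℝ (Fin 2))} (hR : R.Nonempty)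
    (hB : B.Nonempty) (hRB : Disjoint R B)
    (hu : R ∪ B = (Icc 1 (2 * k + 1)).image triangularChain) : mst R + mst B ≤ 3 * k - 2 :=
  mst_add_mst_le_of_union_eq_image injective (fun _ _ => dist_le) k hR hB hRB hu

theorem exists_partition_mst_add_mst_eq {k : ℕ} (hk : 1 ≤ k) :
    ∃ R B : Finset (EuclideanSpace ℝ (Fin 2)), R.Nonempty ∧ B.Nonempty ∧ Disjoint R B ∧
      R ∪ B = (Icc 1 (2 * k + 1)).image triangularChain ∧ mst R + mst B = 3 * k - 2 := by
  have hends : ({1, 2 * k + 1} : Finset ℕ).Nonempty := insert_nonempty _ _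
  have hmid : (Icc 2 (2 * k)).Nonempty := nonempty_Icc.mpr (by omega)
  have hd : Disjoint ({1, 2 * k + 1} : Finset ℕ) (Icc 2 (2 * k)) := by
    simp only [disjoint_insert_left, disjoint_singleton_left, mem_Icc]
    omega
  have hu : {1, 2 * k + 1} ∪ Icc 2 (2 * k) = Icc 1 (2 * k + 1) := by
    ext
    simp only [mem_union, mem_insert, mem_singleton, mem_Icc]
    omega
  have hu' := congrArg (image triangularChain) hu
  rw [image_union] at hu'
  have hd' := (disjoint_image injective).mpr hd
  refine ⟨_, _, hends.image _, hmid.image _, hd', hu',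
    le_antisymm (mst_add_mst_le (hends.image _) (hmid.image _) hd' hu') ?_⟩
  have hends_mst := le_mst_image injective hends (d := k) fun i hi j hj hij => by
    have hij' : (i : ℝ) = j + 2 * k ∨ (j : ℝ) = i + 2 * k := by
      simp only [mem_insert, mem_singleton] at hi hj
      norm_cast
      omega
    have h2k : 2 * (k : ℝ) ≤ |(i : ℝ) - j| :=
      le_abs.mpr (by rcases hij' with h | h <;> [left; right] <;> linarith)
    linarith [abs_sub_div_two_le_dist i j]
  have hmid_mst := le_mst_image injective hmid fun i _ j _ => one_le_dist
  rw [card_pair (by omega)] at hends_mst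
  rw [Nat.card_Icc, Nat.cast_sub (by omega)] at hmid_mst
  push_cast at hends_mst hmid_mst
  linarith

end triangularChain

theorem triangular_chain_max_mst_ratio (k : ℕ) (hk : 1 ≤ k)
    (p : ℕ → EuclideanSpace ℝ (Fin 2))
    (hp : ∀ j, p j =
      if Odd j then (WithLp.equiv 2 (Fin 2 → ℝ)).symm ![(j : ℝ) / 2, 0]
      else (WithLp.equiv 2 (Fin 2 → ℝ)).symm ![(j : ℝ) / 2, Real.sqrt 3 / 2])
    (P : Finset (EuclideanSpace ℝ (Fin 2)))
    (hP : P = (Finset.Icc 1 (2 * k + 1)).image p) :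
    mst P = 2 * (k : ℝ) ∧
    IsGreatest {x : ℝ | ∃ R B : Finset (EuclideanSpace ℝ (Fin 2)),
        R.Nonempty ∧ B.Nonempty ∧ Disjoint R B ∧ R ∪ B = P ∧ x = mst R + mst B}
      (3 * (k : ℝ) - 2) ∧
    IsGreatest {x : ℝ | ∃ R B : Finset (EuclideanSpace ℝ (Fin 2)),
        R.Nonempty ∧ B.Nonempty ∧ Disjoint R B ∧ R ∪ B = P ∧
        x = (mst R + mst B) / mst P}
      ((3 * (k : ℝ) - 2) / (2 * (k : ℝ))) := by
  obtain rfl : p = triangularChain := funext hp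
  subst hP
  have hmst := triangularChain.mst_image_Icc k
  obtain ⟨R₀, B₀, hR₀, hB₀, hd₀, hu₀, hsum₀⟩ :=
    triangularChain.exists_partition_mst_add_mst_eq hk
  refine ⟨hmst, ⟨⟨R₀, B₀, hR₀, hB₀, hd₀, hu₀, hsum₀.symm⟩, ?_⟩,
    ⟨⟨R₀, B₀, hR₀, hB₀, hd₀, hu₀, by rw [hsum₀, hmst]⟩, ?_⟩⟩
  · rintro _ ⟨R, B, hR, hB, hd, hu, rfl⟩
    exact triangularChain.mst_add_mst_le hR hB hd hu
  · rintro _ ⟨R, B, hR, hB, hd, hu, rfl⟩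
    rw [hmst]
    exact div_le_div_of_nonneg_right (triangularChain.mst_add_mst_le hR hB hd hu) (by positivity)
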